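/- arXiv:2201.05201 — 3 statements merged into one kernel-verified Lean document; each statement's English description precedes it below -/
import Mathlib

section
/- Let n ≥ 1, let L ⊂ ℝ^n be a full-rank lattice, and let τ > 0 be real. Then Θ(L,iτ) = lim_{s→∞} (πτ/s)^{−s} · ζ_{s/(πτ)}(L,s), where the limit is taken as the real parameter s tends to infinity. -/
open scoped BigOperators
open MeasureTheory Filter Matrix

noncomputable section

/-- `ℝ^n` with the Euclidean norm. -/
abbrev Vn (n : ℕ) := EuclideanSpace ℝ (Fin n)

/-- The set of all integer combinations of the vectors `B`. -/
def latticeOf {n k : ℕ} (B : Fin k → Vn n) : Set (Vn n) :=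
  Set.range (fun z : Fin k → ℤ => ∑ i, (z i : ℝ) • B i)

/-- `L` is a lattice of rank `k` in `ℝ^n`: the set of integer combinations of `k`
linearly independent vectors. -/
def IsLatticeOfRank (n k : ℕ) (L : Set (Vn n)) : Prop :=
  ∃ B : Fin k → Vn n, LinearIndependent ℝ B ∧ L = latticeOf B

/-- `L` is a full-rank lattice in `ℝ^n`. -/
def IsLattice (n : ℕ) (L : Set (Vn n)) : Prop := IsLatticeOfRank n n L

/-- Gram determinant `det(BᵀB)` of a family of vectors; the determinant of the lattice
they generate is its square root. -/
def gramDet {n d : ℕ} (v : Fin d → Vn n) : ℝ :=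
  Matrix.det (Matrix.of fun i j => (inner ℝ (v i) (v j) : ℝ))

/-- Every sublattice of `L` has determinant at least one.  (Every sublattice of a lattice
is the integer span of finitely many ℝ-linearly independent lattice vectors, and its
determinant is the square root of their Gram determinant.) -/
def SubdetGeOne (n : ℕ) (L : Set (Vn n)) : Prop :=
  ∀ (d : ℕ) (v : Fin d → Vn n), (∀ i, v i ∈ L) → LinearIndependent ℝ v →
    1 ≤ Real.sqrt (gramDet v)

/-- `L` is a stable lattice: a full-rank lattice of determinant one all of whose
sublattices have determinant at least one. -/
def IsStable (n : ℕ) (L : Set (Vn n)) : Prop :=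
  (∃ B : Fin n → Vn n, LinearIndependent ℝ B ∧ L = latticeOf B ∧ Real.sqrt (gramDet B) = 1)
    ∧ SubdetGeOne n L

/-- The integer lattice `ℤ^n ⊂ ℝ^n`. -/
def intLattice (n : ℕ) : Set (Vn n) := {y | ∀ i, ∃ z : ℤ, y i = (z : ℝ)}

/-- `ζ'_q(L, s) = Σ_{y ∈ L, y ≠ 0} (‖y‖² + q)^{-s}`. -/
def zetaP (n : ℕ) (L : Set (Vn n)) (s q : ℝ) : ℝ :=
  ∑' y : {y : Vn n // y ∈ L ∧ y ≠ 0}, (‖(y : Vn n)‖ ^ 2 + q) ^ (-s)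

/-- `ζ_q(L, s) = Σ_{y ∈ L} (‖y‖² + q)^{-s}`. -/
def zetaQ (n : ℕ) (L : Set (Vn n)) (s q : ℝ) : ℝ :=
  ∑' y : L, (‖(y : Vn n)‖ ^ 2 + q) ^ (-s)

/-- The lattice theta function `Θ(L, iτ) = Σ_{y ∈ L} exp(-πτ‖y‖²)`. -/
def theta (n : ℕ) (L : Set (Vn n)) (τ : ℝ) : ℝ :=
  ∑' y : L, Real.exp (-Real.pi * τ * ‖(y : Vn n)‖ ^ 2)

/-- Isomorphism of full-rank lattices in `ℝ^n` via an orthogonal transformation. -/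
def IsoLattices (n : ℕ) (L1 L2 : Set (Vn n)) : Prop :=
  ∃ R : Vn n ≃ₗᵢ[ℝ] Vn n, R '' L2 = L1

/-- Direct sum of two lattices, realized in `ℝ^{n1+n2}` by concatenating coordinates. -/
def dsum {n1 n2 : ℕ} (L1 : Set (Vn n1)) (L2 : Set (Vn n2)) : Set (Vn (n1 + n2)) :=
  {y | ∃ x ∈ L1, ∃ z ∈ L2,
    ∀ i : Fin (n1 + n2), y i = Fin.append (fun j => x j) (fun j => z j) i}

/-- Lattices (possibly in different ambient spaces) are isomorphic: there is a linear map
that is isometric on `span L` and carries `L` onto `L'`. -/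
def LatticeIso {m m' : ℕ} (L : Set (Vn m)) (L' : Set (Vn m')) : Prop :=
  ∃ f : Vn m →ₗ[ℝ] Vn m', (∀ x ∈ Submodule.span ℝ L, ‖f x‖ = ‖x‖) ∧ f '' L = L'

/-- A rank-`k` lattice is decomposable if it is isomorphic to the direct sum of two
non-trivial lattices of strictly lower rank. -/
def Decomposable {m : ℕ} (k : ℕ) (L : Set (Vn m)) : Prop :=
  ∃ (m1 m2 k1 k2 : ℕ) (L1 : Set (Vn m1)) (L2 : Set (Vn m2)),
    1 ≤ k1 ∧ 1 ≤ k2 ∧ k1 + k2 = k ∧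
    IsLatticeOfRank m1 k1 L1 ∧ IsLatticeOfRank m2 k2 L2 ∧ LatticeIso L (dsum L1 L2)

/-- `L'` is a sublattice of `L`: an additive subgroup of `L`. -/
def IsSublatticeOf {n : ℕ} (L L' : Set (Vn n)) : Prop :=
  L' ⊆ L ∧ (0 : Vn n) ∈ L' ∧ ∀ x ∈ L', ∀ y ∈ L', x - y ∈ L'

/-- `L'` is a primitive sublattice of `L`, i.e. `L' = L ∩ span(L')`. -/
def IsPrimitive {n : ℕ} (L L' : Set (Vn n)) : Prop :=
  IsSublatticeOf L L' ∧ L' = L ∩ (Submodule.span ℝ L' : Set (Vn n))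

/-- The quotient lattice `L/L'`: the orthogonal projection of `L` onto `span(L')ᗮ`. -/
def quotLattice {n : ℕ} (L L' : Set (Vn n)) : Set (Vn n) :=
  (fun x => ((Submodule.orthogonalProjectionOnto (Submodule.span ℝ L')ᗮ x : Vn n))) '' L

/-- The (internal, orthogonal) direct sum of two subsets of `ℝ^n`. -/
def sumSet {n : ℕ} (A B : Set (Vn n)) : Set (Vn n) := {v | ∃ x ∈ A, ∃ y ∈ B, v = x + y}

/-- The modified Bessel function of the second kind,
`K_α(x) = ∫₀^∞ exp(-x cosh t) cosh(αt) dt`. -/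
def Kfun (α x : ℝ) : ℝ :=
  ∫ t in Set.Ioi (0 : ℝ), Real.exp (-x * Real.cosh t) * Real.cosh (α * t)

/-- `K̄_α(x) = 2^{1-α} x^α K_α(x)` for `x > 0`, and `K̄_α(0) = Γ(α)`. -/
def Kbar (α x : ℝ) : ℝ :=
  if x = 0 then Real.Gamma α else 2 ^ (1 - α) * x ^ α * Kfun α x

/-- The dual lattice `L* = {w : ⟨w, y⟩ ∈ ℤ for all y ∈ L}`. -/
def dualLattice (n : ℕ) (L : Set (Vn n)) : Set (Vn n) :=
  {w | ∀ y ∈ L, ∃ z : ℤ, (inner ℝ w y : ℝ) = (z : ℝ)}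

/-- `λ₁(L)`: the length of the shortest non-zero vector of `L`. -/
def lambda1 {n : ℕ} (L : Set (Vn n)) : ℝ := sInf {r | ∃ y ∈ L, y ≠ 0 ∧ ‖y‖ = r}

/-- `E(A) = Σ_{(x,y) ∈ L1 × L2, (x,y) ≠ 0} (‖x‖² + yᵀ e^A y + q)^{-s}`. -/
def Efun (n d : ℕ) (L1 : Set (Vn (n - d))) (L2 : Set (Vn d)) (s q : ℝ)
    (A : Matrix (Fin d) (Fin d) ℝ) : ℝ :=
  ∑' p : {p : Vn (n - d) × Vn d // p.1 ∈ L1 ∧ p.2 ∈ L2 ∧ p ≠ 0},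
    (‖p.1.1‖ ^ 2 +
      (fun i => p.1.2 i) ⬝ᵥ (NormedSpace.exp A).mulVec (fun i => p.1.2 i) + q) ^ (-s)

/-!
Put `t = πτ`. With `q = s / t` the summand `(t/s)^{-s} (‖y‖² + q)^{-s}` equals
`(1 + t‖y‖²/s)^{-s}`, which tends to `exp(-t‖y‖²)` and, by Bernoulli's inequality, decreases in
`s`. For `s₀` above half the rank these summands at `s₀` are summable over the lattice (compare with
`∑ ‖y‖^{-2s₀}`), so dominated convergence for series lets the limit pass through the sum.
-/

open Real

lemma one_add_div_rpow_le_of_le {c t s : ℝ} (hc : 0 ≤ c) (ht : 0 < t) (hts : t ≤ s) :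
    (1 + c / t) ^ t ≤ (1 + c / s) ^ s := by
  have hs : 0 < s := ht.trans_le hts
  have bernoulli : 1 + c / t ≤ (1 + c / s) ^ (s / t) := by
    have h := one_add_mul_self_le_rpow_one_add (by linarith [div_nonneg hc hs.le] : -1 ≤ c / s)
      ((one_le_div ht).2 hts)
    rwa [div_mul_div_cancel₀' hs.ne'] at h
  calc (1 + c / t) ^ t ≤ ((1 + c / s) ^ (s / t)) ^ t := rpow_le_rpow (by positivity) bernoulli ht.le
    _ = (1 + c / s) ^ s := by rw [← rpow_mul (by positivity), div_mul_cancel₀ s ht.ne']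

theorem tendsto_tsum_one_add_div_rpow_neg {ι : Type*} {c : ι → ℝ} (hc : ∀ i, 0 ≤ c i) {s₀ : ℝ}
    (hs₀ : 0 < s₀) (hsum : Summable fun i => (1 + c i / s₀) ^ (-s₀)) :
    Tendsto (fun s : ℝ => ∑' i, (1 + c i / s) ^ (-s)) atTop (nhds (∑' i, exp (-c i))) := by
  refine tendsto_tsum_of_dominated_convergence hsum (fun i => ?_) ?_
  · have hci := hc i
    have h := (tendsto_one_add_div_rpow_exp (c i)).inv₀ (exp_ne_zero _)
    rw [← exp_neg] at h
    refine h.congr' ?_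
    filter_upwards [eventually_gt_atTop 0] with s hs
    rw [rpow_neg (by positivity)]
  · filter_upwards [eventually_ge_atTop s₀] with s hs i
    have hci := hc i
    have hs' : 0 < s := hs₀.trans_le hs
    rw [norm_of_nonneg (by positivity), rpow_neg (by positivity), rpow_neg (by positivity)]
    exact inv_anti₀ (by positivity) (one_add_div_rpow_le_of_le hci hs₀ hs)

lemma div_rpow_neg_mul_add_div_rpow_neg {t s x : ℝ} (ht : 0 < t) (hs : 0 < s) (hx : 0 ≤ x) :
    (t / s) ^ (-s) * (x + s / t) ^ (-s) = (1 + t * x / s) ^ (-s) := by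
  rw [← mul_rpow (by positivity) (by positivity)]
  congr 1
  field_simp
  ring

section ZLattice

variable {E : Type*} [NormedAddCommGroup E] [NormedSpace ℝ E] [FiniteDimensional ℝ E]
  (L : Submodule ℤ E) [DiscreteTopology L]

theorem ZLattice.summable_norm_sq_add_rpow_neg {q s : ℝ} (hq : 0 < q)
    (hs : Module.finrank ℤ L < 2 * s) :
    Summable fun z : L => (‖z‖ ^ 2 + q) ^ (-s) := by
  have hs0 : 0 < s := by linarith [(Nat.cast_nonneg (α := ℝ) (Module.finrank ℤ L))]
  refine .of_norm_bounded_eventually (ZLattice.summable_norm_rpow L (-2 * s) (by linarith)) ?_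
  filter_upwards [eventually_cofinite_ne 0] with z hz
  have hz' : 0 < ‖z‖ := norm_pos_iff.2 hz
  calc ‖(‖z‖ ^ 2 + q) ^ (-s)‖ = (‖z‖ ^ 2 + q) ^ (-s) := norm_of_nonneg (by positivity)
    _ ≤ (‖z‖ ^ 2) ^ (-s) := rpow_le_rpow_of_nonpos (by positivity) (by linarith) (by linarith)
    _ = ‖z‖ ^ (-2 * s) := by
      rw [← rpow_natCast, ← rpow_mul hz'.le]
      norm_num

theorem ZLattice.tendsto_div_rpow_neg_mul_tsum_norm_sq_add_rpow_neg {t : ℝ} (ht : 0 < t) :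
    Tendsto (fun s : ℝ => (t / s) ^ (-s) * ∑' z : L, (‖z‖ ^ 2 + s / t) ^ (-s)) atTop
      (nhds (∑' z : L, exp (-t * ‖z‖ ^ 2))) := by
  set s₀ : ℝ := Module.finrank ℤ L + 1
  have hs₀ : 0 < s₀ := by positivity
  have hsum : Summable fun z : L => (1 + t * ‖z‖ ^ 2 / s₀) ^ (-s₀) := by
    refine ((summable_norm_sq_add_rpow_neg L (div_pos hs₀ ht) (s := s₀) (by linarith)).mul_left
      ((t / s₀) ^ (-s₀))).congr fun z => ?_
    exact div_rpow_neg_mul_add_div_rpow_neg ht hs₀ (by positivity)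
  simp only [neg_mul]
  refine (tendsto_tsum_one_add_div_rpow_neg (fun z => by positivity) hs₀ hsum).congr' ?_
  filter_upwards [eventually_gt_atTop 0] with s hs
  rw [← tsum_mul_left]
  exact tsum_congr fun z => (div_rpow_neg_mul_add_div_rpow_neg ht hs (by positivity)).symm

end ZLattice

lemma latticeOf_eq_span {n k : ℕ} (B : Fin k → Vn n) :
    latticeOf B = Submodule.span ℤ (Set.range B) := by
  ext x
  simp only [latticeOf, Set.mem_range, SetLike.mem_coe, ← Submodule.mem_span_range_iff_exists_fun,
    Int.cast_smul_eq_zsmul]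

theorem statement4_general (n : ℕ) (L : Set (Vn n)) (hL : IsLattice n L)
    (τ : ℝ) (hτ : 0 < τ) :
    Tendsto (fun s : ℝ => (Real.pi * τ / s) ^ (-s) * zetaQ n L s (s / (Real.pi * τ)))
      atTop (nhds (theta n L τ)) := by
  obtain ⟨B, hB, rfl⟩ := hL
  let b := basisOfLinearIndependentOfCardEqFinrank' B hB (by simp)
  have hspan : latticeOf B = Submodule.span ℤ (Set.range b) := by
    rw [coe_basisOfLinearIndependentOfCardEqFinrank', latticeOf_eq_span]
  rw [hspan]
  convert ZLattice.tendsto_div_rpow_neg_mul_tsum_norm_sq_add_rpow_neg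
    (Submodule.span ℤ (Set.range b)) (mul_pos pi_pos hτ) using 3
  · rfl
  · simp only [theta, neg_mul]
    rfl

/-- For any full-rank lattice `L ⊂ ℝ^n` and `τ > 0`,
`Θ(L,iτ) = lim_{s→∞} (πτ/s)^{-s} ζ_{s/(πτ)}(L,s)`. -/
theorem statement4 (n : ℕ) (hn : 1 ≤ n) (L : Set (Vn n)) (hL : IsLattice n L)
    (τ : ℝ) (hτ : 0 < τ) :
    Tendsto (fun s : ℝ => (Real.pi * τ / s) ^ (-s) * zetaQ n L s (s / (Real.pi * τ)))
      atTop (nhds (theta n L τ)) :=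
  statement4_general n L hL τ hτ
end
end

section
/- Let L ⊂ ℝ^n be a stable full-rank lattice such that every decomposition L ≅ L_1 ⊕ L_2 with L_2 non-trivial and indecomposable has rank(L_2) = 1. Then L ≅ ℤ^n. -/
open scoped BigOperators
open MeasureTheory Filter Matrix

noncomputable section

/-!
Repeatedly splitting `L` along decompositions `L ≅ L₁ ⊕ L₂`, every piece is eventually
indecomposable, hence of rank one by hypothesis; so `L` has an orthogonal basis `v`.
Stability gives `‖vᵢ‖ ≥ 1` for each basis vector, while `∏ ‖vᵢ‖² = det(L)² = 1`; hence the basis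
is orthonormal and `L ≅ ℤⁿ`.
-/

open scoped RealInnerProductSpace

namespace StableLattice

lemma self_mem_latticeOf {n k : ℕ} (B : Fin k → Vn n) (i : Fin k) : B i ∈ latticeOf B :=
  ⟨Pi.single i 1, by simp [Pi.single_apply, ite_smul]⟩

lemma image_latticeOf {n m k : ℕ} (f : Vn n →ₗ[ℝ] Vn m) (B : Fin k → Vn n) :
    f '' latticeOf B = latticeOf (fun i => f (B i)) := by
  ext y
  constructor
  · rintro ⟨x, ⟨z, rfl⟩, rfl⟩
    exact ⟨z, by simp [map_sum, _root_.map_smul]⟩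
  · rintro ⟨z, rfl⟩
    exact ⟨∑ i, (z i : ℝ) • B i, ⟨z, rfl⟩, by simp [map_sum, _root_.map_smul]⟩

lemma latticeOf_single (n : ℕ) :
    latticeOf (fun i : Fin n => EuclideanSpace.single i (1 : ℝ)) = intLattice n := by
  ext y
  constructor
  · rintro ⟨c, rfl⟩ j
    exact ⟨c j, by simp [Pi.single_apply]⟩
  · intro hy
    choose c hc using hy
    exact ⟨c, by ext j; simp [Pi.single_apply, hc j]⟩

lemma exists_intCombination_of_latticeOf_subset {n k l : ℕ} {v : Fin l → Vn n}
    {w : Fin k → Vn n} (h : latticeOf w ⊆ latticeOf v) :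
    ∃ Z : Matrix (Fin k) (Fin l) ℤ, w = fun i => ∑ j, (Z i j : ℝ) • v j := by
  have hw : ∀ i, ∃ z : Fin l → ℤ, ∑ j, (z j : ℝ) • v j = w i := fun i =>
    h (self_mem_latticeOf w i)
  choose Z hZ using hw
  exact ⟨Matrix.of Z, funext fun i => (hZ i).symm⟩

section Append

variable {a b : ℕ}

def append (x : Vn a) (z : Vn b) : Vn (a + b) :=
  WithLp.toLp 2 (Fin.append (fun j => x j) (fun j => z j))

@[simp] lemma append_castAdd (x : Vn a) (z : Vn b) (i : Fin a) :
    append x z (Fin.castAdd b i) = x i := Fin.append_left _ _ i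

@[simp] lemma append_natAdd (x : Vn a) (z : Vn b) (i : Fin b) :
    append x z (Fin.natAdd a i) = z i := Fin.append_right _ _ i

lemma append_add (x x' : Vn a) (z z' : Vn b) :
    append (x + x') (z + z') = append x z + append x' z' := by
  ext i
  induction i using Fin.addCases <;> simp

lemma append_smul (c : ℝ) (x : Vn a) (z : Vn b) :
    append (c • x) (c • z) = c • append x z := by
  ext i
  induction i using Fin.addCases <;> simp

lemma inner_append (x x' : Vn a) (z z' : Vn b) :
    ⟪append x z, append x' z'⟫ = ⟪x, x'⟫ + ⟪z, z'⟫ := by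
  simp [PiLp.inner_apply, Fin.sum_univ_add]

lemma norm_append_sq (x : Vn a) (z : Vn b) : ‖append x z‖ ^ 2 = ‖x‖ ^ 2 + ‖z‖ ^ 2 := by
  simp only [← real_inner_self_eq_norm_sq, inner_append]

def projLeft (a b : ℕ) : Vn (a + b) →ₗ[ℝ] Vn a where
  toFun y := WithLp.toLp 2 (fun i => y (Fin.castAdd b i))
  map_add' _ _ := rfl
  map_smul' _ _ := rfl

def projRight (a b : ℕ) : Vn (a + b) →ₗ[ℝ] Vn b where
  toFun y := WithLp.toLp 2 (fun i => y (Fin.natAdd a i))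
  map_add' _ _ := rfl
  map_smul' _ _ := rfl

@[simp] lemma projLeft_apply (y : Vn (a + b)) (i : Fin a) :
    projLeft a b y i = y (Fin.castAdd b i) := rfl

@[simp] lemma projRight_apply (y : Vn (a + b)) (i : Fin b) :
    projRight a b y i = y (Fin.natAdd a i) := rfl

@[simp] lemma projLeft_append (x : Vn a) (z : Vn b) : projLeft a b (append x z) = x := by
  ext i; simp

@[simp] lemma projRight_append (x : Vn a) (z : Vn b) : projRight a b (append x z) = z := by
  ext i; simp

lemma append_eq_zero_iff {x : Vn a} {z : Vn b} : append x z = 0 ↔ x = 0 ∧ z = 0 := by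
  refine ⟨fun h => ⟨?_, ?_⟩, fun ⟨hx, hz⟩ => ?_⟩
  · simpa using congrArg (projLeft a b) h
  · simpa using congrArg (projRight a b) h
  · ext i
    induction i using Fin.addCases <;> simp [hx, hz]

lemma append_projLeft_projRight (y : Vn (a + b)) :
    append (projLeft a b y) (projRight a b y) = y := by
  ext i
  induction i using Fin.addCases <;> simp

lemma norm_sq_eq_projLeft_add_projRight (y : Vn (a + b)) :
    ‖y‖ ^ 2 = ‖projLeft a b y‖ ^ 2 + ‖projRight a b y‖ ^ 2 := by
  conv_lhs => rw [← append_projLeft_projRight y]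
  exact norm_append_sq _ _

def appendMap {c : ℕ} (u : Vn c →ₗ[ℝ] Vn a) (v : Vn c →ₗ[ℝ] Vn b) : Vn c →ₗ[ℝ] Vn (a + b) where
  toFun y := append (u y) (v y)
  map_add' y z := by simp only [map_add, append_add]
  map_smul' r y := by simp only [_root_.map_smul, append_smul, RingHom.id_apply]

@[simp] lemma appendMap_apply {c : ℕ} (u : Vn c →ₗ[ℝ] Vn a) (v : Vn c →ₗ[ℝ] Vn b) (y : Vn c) :
    appendMap u v y = append (u y) (v y) := rfl

end Append

lemma mem_dsum {a b : ℕ} {L1 : Set (Vn a)} {L2 : Set (Vn b)} {y : Vn (a + b)} :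
    y ∈ dsum L1 L2 ↔ ∃ x ∈ L1, ∃ z ∈ L2, y = append x z :=
  ⟨fun ⟨x, hx, z, hz, h⟩ => ⟨x, hx, z, hz, PiLp.ext h⟩,
    fun ⟨x, hx, z, hz, h⟩ => ⟨x, hx, z, hz, fun i => by rw [h]; rfl⟩⟩

section LatticeIso

variable {m m' m'' : ℕ}

lemma latticeIso_of_norm_sq_eq {L : Set (Vn m)} {L' : Set (Vn m')} (f : Vn m →ₗ[ℝ] Vn m')
    (hf : ∀ x, ‖f x‖ ^ 2 = ‖x‖ ^ 2) (hL : f '' L = L') : LatticeIso L L' :=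
  ⟨f, fun x _ => (pow_left_inj₀ (norm_nonneg _) (norm_nonneg _) two_ne_zero).mp (hf x), hL⟩

lemma _root_.LatticeIso.trans {A : Set (Vn m)} {B : Set (Vn m')} {C : Set (Vn m'')}
    (h1 : LatticeIso A B) (h2 : LatticeIso B C) : LatticeIso A C := by
  obtain ⟨f, hf, rfl⟩ := h1
  obtain ⟨g, hg, rfl⟩ := h2
  have hspan : ∀ x ∈ Submodule.span ℝ A, f x ∈ Submodule.span ℝ (f '' A) := fun x hx => by
    rw [← Submodule.map_span]; exact Submodule.mem_map_of_mem hx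
  refine ⟨g.comp f, fun x hx => ?_, Set.image_comp g f A⟩
  rw [LinearMap.comp_apply, hg _ (hspan x hx), hf x hx]

def isometryOnSpan {S : Set (Vn m)} (f : Vn m →ₗ[ℝ] Vn m')
    (hf : ∀ x ∈ Submodule.span ℝ S, ‖f x‖ = ‖x‖) : Submodule.span ℝ S →ₗᵢ[ℝ] Vn m' :=
  ⟨f.domRestrict _, fun x => hf x x.2⟩

lemma injOn_span_of_norm_eq {S : Set (Vn m)} {f : Vn m →ₗ[ℝ] Vn m'}
    (hf : ∀ x ∈ Submodule.span ℝ S, ‖f x‖ = ‖x‖) : Set.InjOn f (Submodule.span ℝ S) :=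
  fun x hx y hy hxy => congrArg Subtype.val
    ((isometryOnSpan f hf).injective (a₁ := ⟨x, hx⟩) (a₂ := ⟨y, hy⟩) hxy)

lemma inner_map_map_of_norm_eq {S : Set (Vn m)} {f : Vn m →ₗ[ℝ] Vn m'}
    (hf : ∀ x ∈ Submodule.span ℝ S, ‖f x‖ = ‖x‖) {x y : Vn m}
    (hx : x ∈ Submodule.span ℝ S) (hy : y ∈ Submodule.span ℝ S) : ⟪f x, f y⟫ = ⟪x, y⟫ :=
  (isometryOnSpan f hf).inner_map_map ⟨x, hx⟩ ⟨y, hy⟩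

lemma exists_latticeOf_of_latticeIso_latticeOf {k : ℕ} {L : Set (Vn m)} {U : Fin k → Vn m'}
    (h : LatticeIso L (latticeOf U)) :
    ∃ v : Fin k → Vn m, L = latticeOf v ∧ ∀ i j, ⟪v i, v j⟫ = ⟪U i, U j⟫ := by
  obtain ⟨g, hg, hgL⟩ := h
  have hU : ∀ i, U i ∈ g '' L := fun i => hgL ▸ self_mem_latticeOf U i
  choose v hvL hgv using hU
  have hspan : ∀ z : Fin k → ℤ, ∑ i, (z i : ℝ) • v i ∈ Submodule.span ℝ L := fun z =>
    Submodule.sum_mem _ fun i _ => Submodule.smul_mem _ _ (Submodule.subset_span (hvL i))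
  have hgsum : ∀ z : Fin k → ℤ, g (∑ i, (z i : ℝ) • v i) = ∑ i, (z i : ℝ) • U i := fun z => by
    simp only [map_sum, _root_.map_smul, hgv]
  refine ⟨v, Set.ext fun y => ⟨fun hy => ?_, ?_⟩, fun i j => ?_⟩
  · obtain ⟨z, hz⟩ : g y ∈ latticeOf U := hgL ▸ Set.mem_image_of_mem g hy
    refine ⟨z, injOn_span_of_norm_eq hg (hspan z) (Submodule.subset_span hy) ?_⟩
    rw [hgsum]
    exact hz
  · rintro ⟨z, rfl⟩
    obtain ⟨y, hy, hgy⟩ : g (∑ i, (z i : ℝ) • v i) ∈ g '' L := hgL ▸ hgsum z ▸ ⟨z, rfl⟩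
    change ∑ i, (z i : ℝ) • v i ∈ L
    rwa [← injOn_span_of_norm_eq hg (Submodule.subset_span hy) (hspan z) hgy]
  · rw [← hgv i, ← hgv j, inner_map_map_of_norm_eq hg (Submodule.subset_span (hvL i))
      (Submodule.subset_span (hvL j))]

end LatticeIso

section DirectSum

variable {n1 n2 n3 : ℕ}

lemma projRight_mem_span_of_mem_span_dsum {L1 : Set (Vn n1)} {L2 : Set (Vn n2)}
    {y : Vn (n1 + n2)} (hy : y ∈ Submodule.span ℝ (dsum L1 L2)) :
    projRight n1 n2 y ∈ Submodule.span ℝ L2 := by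
  refine (Submodule.span_le (p := (Submodule.span ℝ L2).comap (projRight n1 n2))).mpr ?_ hy
  intro w hw
  obtain ⟨x, -, z, hz, rfl⟩ := mem_dsum.mp hw
  simpa using Submodule.subset_span hz

lemma _root_.LatticeIso.dsum_right {L1 : Set (Vn n1)} {L2 : Set (Vn n2)} {m : ℕ} {X : Set (Vn m)}
    (h : LatticeIso L2 X) : LatticeIso (dsum L1 L2) (dsum L1 X) := by
  obtain ⟨g, hg, rfl⟩ := h
  refine ⟨appendMap (projLeft n1 n2) (g.comp (projRight n1 n2)), fun y hy => ?_, ?_⟩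
  · rw [← pow_left_inj₀ (norm_nonneg _) (norm_nonneg _) two_ne_zero, appendMap_apply,
      norm_append_sq, LinearMap.comp_apply, hg _ (projRight_mem_span_of_mem_span_dsum hy),
      ← norm_sq_eq_projLeft_add_projRight]
  · ext y
    constructor
    · rintro ⟨w, hw, rfl⟩
      obtain ⟨x, hx, z, hz, rfl⟩ := mem_dsum.mp hw
      exact mem_dsum.mpr ⟨x, hx, g z, Set.mem_image_of_mem g hz, by simp⟩
    · intro hy
      obtain ⟨x, hx, -, ⟨z, hz, rfl⟩, rfl⟩ := mem_dsum.mp hy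
      exact ⟨append x z, mem_dsum.mpr ⟨x, hx, z, hz, rfl⟩, by simp⟩

lemma latticeIso_dsum_comm (L1 : Set (Vn n1)) (L2 : Set (Vn n2)) :
    LatticeIso (dsum L1 L2) (dsum L2 L1) := by
  refine latticeIso_of_norm_sq_eq (appendMap (projRight n1 n2) (projLeft n1 n2))
    (fun y => by rw [appendMap_apply, norm_append_sq, norm_sq_eq_projLeft_add_projRight y,
      add_comm]) ?_
  ext y
  constructor
  · rintro ⟨w, hw, rfl⟩
    obtain ⟨x, hx, z, hz, rfl⟩ := mem_dsum.mp hw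
    exact mem_dsum.mpr ⟨z, hz, x, hx, by simp⟩
  · intro hy
    obtain ⟨z, hz, x, hx, rfl⟩ := mem_dsum.mp hy
    exact ⟨append x z, mem_dsum.mpr ⟨x, hx, z, hz, rfl⟩, by simp⟩

lemma latticeIso_dsum_assoc (L1 : Set (Vn n1)) (L2 : Set (Vn n2)) (L3 : Set (Vn n3)) :
    LatticeIso (dsum L1 (dsum L2 L3)) (dsum (dsum L1 L2) L3) := by
  refine latticeIso_of_norm_sq_eq
    (appendMap (appendMap (projLeft n1 (n2 + n3)) ((projLeft n2 n3).comp (projRight n1 (n2 + n3))))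
      ((projRight n2 n3).comp (projRight n1 (n2 + n3))))
    (fun y => ?_) ?_
  · rw [norm_sq_eq_projLeft_add_projRight y,
      norm_sq_eq_projLeft_add_projRight (projRight n1 (n2 + n3) y)]
    simp only [appendMap_apply, norm_append_sq, LinearMap.comp_apply]
    ring
  · ext y
    constructor
    · rintro ⟨w, hw, rfl⟩
      obtain ⟨x, hx, v, hv, rfl⟩ := mem_dsum.mp hw
      obtain ⟨u, hu, z, hz, rfl⟩ := mem_dsum.mp hv
      exact mem_dsum.mpr ⟨append x u, mem_dsum.mpr ⟨x, hx, u, hu, rfl⟩, z, hz, by simp⟩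
    · intro hy
      obtain ⟨w, hw, z, hz, rfl⟩ := mem_dsum.mp hy
      obtain ⟨x, hx, u, hu, rfl⟩ := mem_dsum.mp hw
      exact ⟨append x (append u z),
        mem_dsum.mpr ⟨x, hx, append u z, mem_dsum.mpr ⟨u, hu, z, hz, rfl⟩, rfl⟩, by simp⟩

lemma latticeIso_dsum_zero_left (L : Set (Vn n1)) : LatticeIso L (dsum ({0} : Set (Vn 0)) L) := by
  refine latticeIso_of_norm_sq_eq (appendMap 0 LinearMap.id) (fun x => by simp [norm_append_sq]) ?_
  ext y
  constructor
  · rintro ⟨x, hx, rfl⟩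
    exact mem_dsum.mpr ⟨0, rfl, x, hx, by simp⟩
  · intro hy
    obtain ⟨x, rfl, z, hz, rfl⟩ := mem_dsum.mp hy
    exact ⟨z, hz, by simp⟩

end DirectSum

section AppendFamily

variable {a b k1 k2 : ℕ}

def appendFamily (u : Fin k1 → Vn a) (w : Fin k2 → Vn b) : Fin (k1 + k2) → Vn (a + b) :=
  Fin.append (fun i => append (u i) 0) (fun j => append 0 (w j))

lemma sum_smul_appendFamily (u : Fin k1 → Vn a) (w : Fin k2 → Vn b) (c : Fin (k1 + k2) → ℝ) :
    ∑ t, c t • appendFamily u w t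
      = append (∑ i, c (Fin.castAdd k2 i) • u i) (∑ j, c (Fin.natAdd k1 j) • w j) := by
  ext p
  induction p using Fin.addCases <;> simp [appendFamily, Fin.sum_univ_add]

lemma dsum_latticeOf (u : Fin k1 → Vn a) (w : Fin k2 → Vn b) :
    dsum (latticeOf u) (latticeOf w) = latticeOf (appendFamily u w) := by
  ext y
  rw [mem_dsum]
  constructor
  · rintro ⟨-, ⟨α, rfl⟩, -, ⟨β, rfl⟩, rfl⟩
    exact ⟨Fin.append α β, (sum_smul_appendFamily u w _).trans (by simp)⟩
  · rintro ⟨c, rfl⟩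
    exact ⟨_, ⟨fun i => c (Fin.castAdd k2 i), rfl⟩, _, ⟨fun j => c (Fin.natAdd k1 j), rfl⟩,
      sum_smul_appendFamily u w (fun t => (c t : ℝ))⟩

lemma linearIndependent_appendFamily {u : Fin k1 → Vn a} {w : Fin k2 → Vn b}
    (hu : LinearIndependent ℝ u) (hw : LinearIndependent ℝ w) :
    LinearIndependent ℝ (appendFamily u w) := by
  rw [Fintype.linearIndependent_iff] at hu hw ⊢
  intro c hc t
  rw [sum_smul_appendFamily] at hc
  induction t using Fin.addCases with
  | left i => exact hu _ (by simpa using congrArg (projLeft a b) hc) i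
  | right j => exact hw _ (by simpa using congrArg (projRight a b) hc) j

end AppendFamily

lemma _root_.IsLatticeOfRank.dsum {a b k1 k2 : ℕ} {L1 : Set (Vn a)} {L2 : Set (Vn b)}
    (h1 : IsLatticeOfRank a k1 L1) (h2 : IsLatticeOfRank b k2 L2) :
    IsLatticeOfRank (a + b) (k1 + k2) (dsum L1 L2) := by
  obtain ⟨u, hu, rfl⟩ := h1
  obtain ⟨w, hw, rfl⟩ := h2
  exact ⟨appendFamily u w, linearIndependent_appendFamily hu hw, dsum_latticeOf u w⟩

lemma isLatticeOfRank_zero : IsLatticeOfRank 0 0 {(0 : Vn 0)} :=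
  ⟨finZeroElim, linearIndependent_empty_type, by simp [latticeOf]⟩

def HasOrthogonalBasis {m : ℕ} (k : ℕ) (L : Set (Vn m)) : Prop :=
  ∃ v : Fin k → Vn m, (∀ i, v i ≠ 0) ∧ Pairwise (fun i j => ⟪v i, v j⟫ = 0) ∧ L = latticeOf v

lemma _root_.IsLatticeOfRank.hasOrthogonalBasis_of_le_one {m k : ℕ} {L : Set (Vn m)}
    (hL : IsLatticeOfRank m k L) (hk : k ≤ 1) : HasOrthogonalBasis k L := by
  obtain ⟨B, hB, rfl⟩ := hL
  exact ⟨B, hB.ne_zero, fun i j hij => (hij ((Fin.subsingleton_iff_le_one.mpr hk).elim i j)).elim,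
    rfl⟩

lemma HasOrthogonalBasis.of_latticeIso {m m' k : ℕ} {L : Set (Vn m)} {L' : Set (Vn m')}
    (h : LatticeIso L L') (hL' : HasOrthogonalBasis k L') : HasOrthogonalBasis k L := by
  obtain ⟨U, hU0, hUo, rfl⟩ := hL'
  obtain ⟨v, rfl, hv⟩ := exists_latticeOf_of_latticeIso_latticeOf h
  exact ⟨v, fun i hi => hU0 i
    (inner_self_eq_zero.mp ((hv i i).symm.trans (by rw [hi, inner_zero_left]))),
    fun i j hij => (hv i j).trans (hUo hij), rfl⟩

lemma HasOrthogonalBasis.dsum {a b k1 k2 : ℕ} {L1 : Set (Vn a)} {L2 : Set (Vn b)}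
    (h1 : HasOrthogonalBasis k1 L1) (h2 : HasOrthogonalBasis k2 L2) :
    HasOrthogonalBasis (k1 + k2) (dsum L1 L2) := by
  obtain ⟨u, hu0, huo, rfl⟩ := h1
  obtain ⟨w, hw0, hwo, rfl⟩ := h2
  refine ⟨appendFamily u w, fun t => ?_, fun s t hst => ?_, dsum_latticeOf u w⟩
  · induction t using Fin.addCases <;> simp [appendFamily, append_eq_zero_iff, hu0, hw0]
  · induction s using Fin.addCases <;> induction t using Fin.addCases <;>
      simp_all [appendFamily, inner_append, Pairwise]

lemma _root_.LatticeIso.dsum_assoc_of_latticeIso {m n1 n2 μ1 μ2 : ℕ} {L : Set (Vn m)}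
    {L1 : Set (Vn n1)} {L2 : Set (Vn n2)} {M1 : Set (Vn μ1)} {M2 : Set (Vn μ2)}
    (h : LatticeIso L (dsum L1 L2)) (h2 : LatticeIso L2 (dsum M1 M2)) :
    LatticeIso L (dsum (dsum L1 M1) M2) :=
  h.trans (h2.dsum_right.trans (latticeIso_dsum_assoc L1 M1 M2))

def IndecomposableSummandsRankOne {n : ℕ} (L : Set (Vn n)) : Prop :=
  ∀ (m1 m2 k1 k2 : ℕ) (L1 : Set (Vn m1)) (L2 : Set (Vn m2)),
    IsLatticeOfRank m1 k1 L1 → IsLatticeOfRank m2 k2 L2 → 1 ≤ k2 →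
    ¬ Decomposable k2 L2 → LatticeIso L (dsum L1 L2) → k2 = 1

/-- Both parts of a decomposable summand of `L` are again summands of `L`, so strong induction
on the rank reduces to indecomposable summands, which have rank one. -/
lemma IndecomposableSummandsRankOne.hasOrthogonalBasis_of_summand {n : ℕ} {L : Set (Vn n)}
    (hL : IndecomposableSummandsRankOne L) (k : ℕ) :
    ∀ {m1 k1 m2 : ℕ} {L1 : Set (Vn m1)} {L2 : Set (Vn m2)},
      IsLatticeOfRank m1 k1 L1 → IsLatticeOfRank m2 k L2 → LatticeIso L (dsum L1 L2) →
      HasOrthogonalBasis k L2 := by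
  induction k using Nat.strong_induction_on with
  | _ k ih =>
  intro m1 k1 m2 L1 L2 hL1 hL2 hiso
  by_cases hdec : Decomposable k L2
  · obtain ⟨μ1, μ2, κ1, κ2, M1, M2, hκ1, hκ2, rfl, hM1, hM2, hsplit⟩ := hdec
    have hsplit' := hsplit.trans (latticeIso_dsum_comm M1 M2)
    have hB1 := ih κ1 (by omega) (hL1.dsum hM2) hM1 (hiso.dsum_assoc_of_latticeIso hsplit')
    have hB2 := ih κ2 (by omega) (hL1.dsum hM1) hM2 (hiso.dsum_assoc_of_latticeIso hsplit)
    exact (hB1.dsum hB2).of_latticeIso hsplit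
  · refine hL2.hasOrthogonalBasis_of_le_one ?_
    rcases Nat.eq_zero_or_pos k with rfl | hk
    · exact zero_le_one
    · exact (hL m1 m2 k1 k L1 L2 hL1 hL2 hk hdec hiso).le

lemma IndecomposableSummandsRankOne.hasOrthogonalBasis {n k : ℕ} {L : Set (Vn n)}
    (hL : IndecomposableSummandsRankOne L) (hk : IsLatticeOfRank n k L) :
    HasOrthogonalBasis k L :=
  hL.hasOrthogonalBasis_of_summand k isLatticeOfRank_zero hk (latticeIso_dsum_zero_left L)

lemma gram_linearCombination {E ι κ : Type*} [NormedAddCommGroup E] [InnerProductSpace ℝ E]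
    [Fintype κ] (A : Matrix ι κ ℝ) (v : κ → E) :
    gram ℝ (fun i => ∑ j, A i j • v j) = A * gram ℝ v * Aᵀ := by
  ext i j
  simp [Matrix.mul_apply, sum_inner, inner_sum, real_inner_smul_left, real_inner_smul_right,
    Finset.mul_sum, mul_comm, mul_left_comm]

lemma gram_eq_diagonal_of_pairwise_inner_eq_zero {E ι : Type*} [NormedAddCommGroup E]
    [InnerProductSpace ℝ E] [DecidableEq ι] {v : ι → E}
    (hv : Pairwise fun i j => ⟪v i, v j⟫ = 0) :
    gram ℝ v = Matrix.diagonal fun i => ‖v i‖ ^ 2 := by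
  ext i j
  rcases eq_or_ne i j with rfl | hij
  · simp
  · simp [hij, hv hij]

lemma gramDet_eq_gram_det {n k : ℕ} (v : Fin k → Vn n) : gramDet v = (gram ℝ v).det := rfl

lemma gramDet_intCombination {n k : ℕ} (Z : Matrix (Fin k) (Fin k) ℤ) (v : Fin k → Vn n) :
    gramDet (fun i => ∑ j, (Z i j : ℝ) • v j) = (Z.det : ℝ) ^ 2 * gramDet v := by
  have h := gram_linearCombination (Z.map (Int.castRingHom ℝ)) v
  have hdet : (Z.map (Int.castRingHom ℝ)).det = Z.det := ((Int.castRingHom ℝ).map_det Z).symm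
  simp only [Matrix.map_apply, eq_intCast] at h
  rw [gramDet_eq_gram_det, h, Matrix.det_mul, Matrix.det_mul, Matrix.det_transpose, hdet,
    gramDet_eq_gram_det]
  ring

lemma gramDet_eq_of_latticeOf_eq {n k : ℕ} {v w : Fin k → Vn n} (hv : LinearIndependent ℝ v)
    (h : latticeOf v = latticeOf w) : gramDet w = gramDet v := by
  obtain ⟨Z, rfl⟩ := exists_intCombination_of_latticeOf_subset h.ge
  obtain ⟨W, hW⟩ := exists_intCombination_of_latticeOf_subset h.le
  have hv0 : gramDet v ≠ 0 := det_gram_ne_zero_iff_linearIndependent.mpr hv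
  have hvw := congrArg gramDet hW
  rw [gramDet_intCombination, gramDet_intCombination] at hvw
  have hreal : ((Z.det ^ 2 * W.det ^ 2 : ℤ) : ℝ) = 1 := by
    rw [Int.cast_mul, Int.cast_pow, Int.cast_pow]
    apply mul_right_cancel₀ hv0
    linear_combination hvw.symm
  have hZ : Z.det ^ 2 = 1 :=
    Int.eq_one_of_mul_eq_one_right (sq_nonneg _) (by exact_mod_cast hreal)
  rw [gramDet_intCombination, ← Int.cast_pow, hZ, Int.cast_one, one_mul]

lemma one_le_norm_of_subdetGeOne {n : ℕ} {L : Set (Vn n)} (hL : SubdetGeOne n L) {x : Vn n}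
    (hx : x ∈ L) (hx0 : x ≠ 0) : 1 ≤ ‖x‖ := by
  have h := hL 1 (fun _ => x) (fun _ => hx) (linearIndependent_unique_iff.mpr hx0)
  rwa [gramDet_eq_gram_det, Matrix.det_unique, gram_apply, real_inner_self_eq_norm_sq,
    Real.sqrt_sq (norm_nonneg x)] at h

lemma orthonormal_of_isStable {n : ℕ} {L : Set (Vn n)} (hL : IsStable n L) {v : Fin n → Vn n}
    (hv0 : ∀ i, v i ≠ 0) (hvo : Pairwise fun i j => ⟪v i, v j⟫ = 0) (hLv : L = latticeOf v) :
    Orthonormal ℝ v := by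
  obtain ⟨⟨B, hB, hLB, hdetB⟩, hsub⟩ := hL
  have hgram : ∏ i, ‖v i‖₊ ^ 2 = 1 := by
    have h := gramDet_eq_of_latticeOf_eq hB (hLB.symm.trans hLv)
    rw [Real.sqrt_eq_one.mp hdetB, gramDet_eq_gram_det,
      gram_eq_diagonal_of_pairwise_inner_eq_zero hvo, Matrix.det_diagonal] at h
    rw [← NNReal.coe_inj]
    push_cast
    exact h
  have hone : ∀ i, 1 ≤ ‖v i‖₊ ^ 2 := fun i =>
    one_le_pow₀ (one_le_norm_of_subdetGeOne hsub (hLv ▸ self_mem_latticeOf v i) (hv0 i))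
  refine ⟨fun i => ?_, hvo⟩
  have h := (Finset.prod_eq_one_iff_of_one_le' fun i _ => hone i).mp hgram i (Finset.mem_univ i)
  exact congrArg NNReal.toReal ((pow_eq_one_iff_of_nonneg (by positivity) two_ne_zero).mp h)

lemma latticeIso_intLattice_of_orthonormal {n : ℕ} {v : Fin n → Vn n} (hv : Orthonormal ℝ v) :
    LatticeIso (latticeOf v) (intLattice n) := by
  let b := OrthonormalBasis.mk hv
    (hv.linearIndependent.span_eq_top_of_card_eq_finrank' (by simp)).ge
  refine ⟨b.repr.toLinearMap, fun x _ => b.repr.norm_map x, ?_⟩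
  have hb : ∀ i, b.repr (v i) = EuclideanSpace.single i 1 := fun i => by
    rw [← b.repr_self i, OrthonormalBasis.coe_mk]
  rw [image_latticeOf]
  change latticeOf (fun i => b.repr (v i)) = _
  simp only [hb]
  exact latticeOf_single n

end StableLattice

theorem statement8_general (n : ℕ) (L : Set (Vn n)) (hL : IsStable n L)
    (hyp : ∀ (m1 m2 k1 k2 : ℕ) (L1 : Set (Vn m1)) (L2 : Set (Vn m2)),
      IsLatticeOfRank m1 k1 L1 → IsLatticeOfRank m2 k2 L2 → 1 ≤ k2 →
      ¬ Decomposable k2 L2 → LatticeIso L (dsum L1 L2) → k2 = 1) :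
    LatticeIso L (intLattice n) := by
  obtain ⟨B, hB, hLB, -⟩ := hL.1
  obtain ⟨v, hv0, hvo, hLv⟩ :=
    StableLattice.IndecomposableSummandsRankOne.hasOrthogonalBasis (L := L) hyp ⟨B, hB, hLB⟩
  rw [hLv]
  exact StableLattice.latticeIso_intLattice_of_orthonormal
    (StableLattice.orthonormal_of_isStable hL hv0 hvo hLv)

/-- If `L ⊂ ℝ^n` is a stable full-rank lattice such that every
decomposition `L ≅ L₁ ⊕ L₂` with `L₂` non-trivial and indecomposable has `rank(L₂) = 1`,
then `L ≅ ℤ^n`. -/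
theorem statement8 (n : ℕ) (hn : 1 ≤ n) (L : Set (Vn n)) (hL : IsStable n L)
    (hyp : ∀ (m1 m2 k1 k2 : ℕ) (L1 : Set (Vn m1)) (L2 : Set (Vn m2)),
      IsLatticeOfRank m1 k1 L1 → IsLatticeOfRank m2 k2 L2 → 1 ≤ k2 →
      ¬ Decomposable k2 L2 → LatticeIso L (dsum L1 L2) → k2 = 1) :
    LatticeIso L (intLattice n) :=
  statement8_general n L hL hyp
end
end

section
/- Let n ≥ 1, let s > n/2 and q > 0 be real, and define f : ℝ^n → ℝ by f(y) := (‖y‖² + q)^{−s}. Then the Fourier transform of f satisfies, for all w ∈ ℝ^n, f̂(w) = (π^{n/2} q^{n/2−s} / Γ(s)) · K̄_{s−n/2}(2π √q ‖w‖). -/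
open scoped BigOperators
open MeasureTheory Filter Matrix

noncomputable section

/-!
Subordination: `Γ(s) (‖y‖² + q)^{-s} = ∫₀^∞ t^{s-1} e^{-qt} e^{-t‖y‖²} dt` writes `f` as a
superposition of Gaussians. The Fourier transform may be taken under the `t`-integral (Fubini:
the absolute integrand integrates to `Γ(s) f`, which is integrable because `2s > n`), and
`e^{-t‖y‖²}` transforms into `(π/t)^{n/2} e^{-π²‖w‖²/t}`. What is left,
`π^{n/2} ∫₀^∞ t^{s-n/2-1} e^{-qt - π²‖w‖²/t} dt`, becomes the integral defining
`K_{s-n/2}(2π√q‖w‖)` under the substitution `t = (π‖w‖/√q) eᵘ`.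
-/

open Real Set

theorem integral_comp_exp {E : Type*} [NormedAddCommGroup E] [NormedSpace ℝ E]
    (g : ℝ → E) : ∫ u, exp u • g (exp u) = ∫ t in Ioi 0, g t := by
  rw [← range_exp, ← image_univ, integral_image_eq_integral_abs_deriv_smul MeasurableSet.univ
    (fun u _ => (hasDerivAt_exp u).hasDerivWithinAt) exp_injective.injOn, setIntegral_univ]
  simp_rw [abs_of_pos (exp_pos _)]

theorem sq_div_four_le_cosh (u : ℝ) : u ^ 2 / 4 ≤ cosh u := by
  have h := quadratic_le_exp_of_nonneg (abs_nonneg u)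
  rw [← cosh_abs, cosh_eq, sq_abs] at *
  nlinarith [abs_nonneg u, exp_pos (-|u|)]

theorem integrable_exp_mul_sub_mul_cosh (ν : ℝ) {c : ℝ} (hc : 0 < c) :
    Integrable fun u : ℝ => exp (ν * u - c * cosh u) := by
  refine ((integrable_exp_neg_mul_sq (by positivity : 0 < c / 8)).const_mul
    (exp (2 * ν ^ 2 / c))).mono' (by fun_prop) (Eventually.of_forall fun u => ?_)
  rw [norm_of_nonneg (exp_pos _).le, ← exp_add, exp_le_exp]
  have hamgm : ν * u ≤ 2 * ν ^ 2 / c + c / 8 * u ^ 2 := by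
    have : 0 ≤ c / 8 * (u - 4 * ν / c) ^ 2 := by positivity
    field_simp at this ⊢
    nlinarith
  nlinarith [sq_div_four_le_cosh u]

theorem integral_exp_mul_sub_mul_cosh (ν : ℝ) {c : ℝ} (hc : 0 < c) :
    ∫ u, exp (ν * u - c * cosh u) = 2 * Kfun ν c := by
  have hint := integrable_exp_mul_sub_mul_cosh ν hc
  rw [← intervalIntegral.integral_Iic_add_Ioi (b := 0) hint.integrableOn hint.integrableOn,
    ← neg_zero, ← integral_comp_neg_Ioi, neg_zero,
    ← integral_add hint.comp_neg.integrableOn hint.integrableOn, Kfun, ← integral_const_mul]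
  refine setIntegral_congr_fun measurableSet_Ioi fun u _ => ?_
  simp only [cosh_neg, cosh_eq (ν * u)]
  rw [sub_eq_add_neg, sub_eq_add_neg, exp_add, exp_add, mul_neg, exp_neg]
  ring_nf

theorem integral_rpow_mul_exp_neg_mul_sub_sq_div (ν : ℝ) {a x : ℝ} (ha : 0 < a) (hx : 0 < x) :
    ∫ t in Ioi 0, t ^ (ν - 1) * exp (-(a * t) - x ^ 2 / (4 * a * t)) =
      2 * (x / (2 * a)) ^ ν * Kfun ν x := by
  -- substitute `t = c eᵘ` with `c = x / (2a)`, which turns `a t + x² / (4at)` into `x cosh u`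
  set c := x / (2 * a) with hc_def
  have hc : 0 < c := by positivity
  rw [← integral_comp_exp, ← integral_add_right_eq_self _ (log c),
    mul_comm 2, mul_assoc, ← integral_exp_mul_sub_mul_cosh ν hx, ← integral_const_mul]
  congr 1 with u
  have hcu : exp (u + log c) = c * exp u := by rw [exp_add, exp_log hc, mul_comm]
  have hpow : c * exp u * (c * exp u) ^ (ν - 1) = c ^ ν * exp (ν * u) := by
    rw [rpow_sub_one (by positivity), mul_div_cancel₀ _ (by positivity),
      mul_rpow hc.le (exp_pos u).le, ← exp_mul, mul_comm u]
  have hexp : -(a * (c * exp u)) - x ^ 2 / (4 * a * (c * exp u)) = -(x * cosh u) := by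
    rw [hc_def, cosh_eq, Real.exp_neg]
    field_simp
    ring
  rw [hcu, smul_eq_mul, ← mul_assoc, hpow, hexp, mul_assoc, ← exp_add]
  ring_nf

theorem integral_rpow_mul_exp_neg_mul_sub_sq_div_eq_Kbar {ν a x : ℝ} (hν : 0 < ν) (ha : 0 < a)
    (hx : 0 ≤ x) :
    ∫ t in Ioi 0, t ^ (ν - 1) * exp (-(a * t) - x ^ 2 / (4 * a * t)) = a ^ (-ν) * Kbar ν x := by
  rcases hx.eq_or_lt with rfl | hx
  · simp [Kbar, integral_rpow_mul_exp_neg_mul_Ioi hν ha, inv_rpow ha.le, rpow_neg ha.le]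
  · rw [integral_rpow_mul_exp_neg_mul_sub_sq_div ν ha hx, Kbar, if_neg hx.ne',
      div_rpow hx.le (by positivity), mul_rpow zero_le_two ha.le, rpow_neg ha.le,
      rpow_sub zero_lt_two, rpow_one]
    field_simp

section Fourier

open scoped FourierTransform RealInnerProductSpace

variable {V : Type*} [NormedAddCommGroup V] [InnerProductSpace ℝ V] [FiniteDimensional ℝ V]
  [MeasurableSpace V] [BorelSpace V]

theorem fourier_integral_eq_integral_fourier {α E : Type*} [MeasurableSpace α] {μ : Measure α}
    [SFinite μ] [NormedAddCommGroup E] [NormedSpace ℂ E] [CompleteSpace E] {F : V → α → E}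
    (hF : Integrable (Function.uncurry F) (volume.prod μ)) (w : V) :
    𝓕 (fun v => ∫ t, F v t ∂μ) w = ∫ t, 𝓕 (F · t) w ∂μ := by
  simp_rw [Real.fourier_eq', ← integral_smul]
  have he : Continuous fun v : V => Complex.exp (↑(-2 * π * ⟪v, w⟫) * Complex.I) := by fun_prop
  refine integral_integral_swap (hF.congr' ?_ (Eventually.of_forall fun ⟨v, t⟩ => by
    simp [norm_smul, Complex.norm_exp]))
  exact (he.measurable.comp measurable_fst).aestronglyMeasurable.smul hF.aestronglyMeasurable

theorem fourier_const_mul (c : ℂ) (g : V → ℂ) (w : V) :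
    𝓕 (fun v => c * g v) w = c * 𝓕 g w :=
  congrFun (VectorFourier.fourierIntegral_const_smul _ _ _ g c) w

theorem fourier_cexp_neg_real_mul_norm_sq {t : ℝ} (ht : 0 < t) (w : V) :
    𝓕 (fun v : V => Complex.exp (-(t : ℂ) * ‖v‖ ^ 2)) w =
      (((π / t) ^ (Module.finrank ℝ V / 2 : ℝ) * exp (-(π ^ 2 * ‖w‖ ^ 2 / t)) : ℝ) : ℂ) := by
  rw [fourier_gaussian_innerProductSpace (by simpa using ht), Complex.ofReal_mul,
    Complex.ofReal_cpow (by positivity), Complex.ofReal_exp]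
  push_cast
  ring_nf

theorem integrable_rpow_neg_norm_sq_add (μ : Measure V) [μ.IsAddHaarMeasure] {s q : ℝ}
    (hs : Module.finrank ℝ V < 2 * s) (hq : 0 < q) :
    Integrable (fun v : V => (‖v‖ ^ 2 + q) ^ (-s)) μ := by
  set k := min q 1
  have hk : 0 < k := lt_min hq one_pos
  have hs0 : 0 < s := by linarith [(Module.finrank ℝ V).cast_nonneg (α := ℝ)]
  have hbase := integrable_rpow_neg_one_add_norm_sq (μ := μ) hs
  rw [neg_div, mul_div_cancel_left₀ _ two_ne_zero] at hbase
  refine (hbase.const_mul (k ^ (-s))).mono' (Measurable.aestronglyMeasurable (by fun_prop))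
    (Eventually.of_forall fun v => ?_)
  rw [norm_of_nonneg (by positivity), ← mul_rpow hk.le (by positivity)]
  refine rpow_le_rpow_of_nonpos (by positivity) ?_ (by linarith)
  nlinarith [min_le_left q 1, min_le_right q 1, sq_nonneg ‖v‖]

theorem integrable_rpow_mul_exp_neg_norm_sq_add_mul {s q : ℝ} (hs : Module.finrank ℝ V < 2 * s)
    (hq : 0 < q) :
    Integrable (Function.uncurry fun (v : V) (t : ℝ) => t ^ (s - 1) * exp (-((‖v‖ ^ 2 + q) * t)))
      (volume.prod (volume.restrict (Ioi 0))) := by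
  have hs0 : 0 < s := by linarith [(Module.finrank ℝ V).cast_nonneg (α := ℝ)]
  refine (integrable_prod_iff (Measurable.aestronglyMeasurable (by fun_prop))).2
    ⟨Eventually.of_forall fun v => ?_, ?_⟩
  · exact (integrableOn_rpow_mul_exp_neg_mul_rpow (s := s - 1) (by linarith) one_pos
      (by positivity : 0 < ‖v‖ ^ 2 + q)).congr_fun (fun t _ => by
        simp only [Function.uncurry_apply_pair, rpow_one, neg_mul])
      measurableSet_Ioi
  · refine ((integrable_rpow_neg_norm_sq_add volume hs hq).const_mul (Gamma s)).congr
      (Eventually.of_forall fun v => ?_)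
    have hr : 0 < ‖v‖ ^ 2 + q := by positivity
    simp only [Function.uncurry_apply_pair]
    rw [setIntegral_congr_fun measurableSet_Ioi fun t (ht : 0 < t) => norm_of_nonneg
      (by positivity), integral_rpow_mul_exp_neg_mul_Ioi hs0 hr, one_div, inv_rpow hr.le,
      ← rpow_neg hr.le, mul_comm]

theorem gamma_mul_fourier_rpow_neg_norm_sq_add {s q : ℝ} (hs : Module.finrank ℝ V < 2 * s)
    (hq : 0 < q) (w : V) :
    (Gamma s : ℂ) * 𝓕 (fun v : V => (((‖v‖ ^ 2 + q) ^ (-s) : ℝ) : ℂ)) w =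
      ((π ^ (Module.finrank ℝ V / 2 : ℝ) * ∫ t in Ioi 0,
        t ^ (s - Module.finrank ℝ V / 2 - 1) * exp (-(q * t) - π ^ 2 * ‖w‖ ^ 2 / t) : ℝ) : ℂ) := by
  set d : ℝ := (Module.finrank ℝ V : ℝ)
  have hs0 : 0 < s := by linarith [(Module.finrank ℝ V).cast_nonneg (α := ℝ)]
  have hsub (v : V) : (Gamma s : ℂ) * (((‖v‖ ^ 2 + q) ^ (-s) : ℝ) : ℂ) =
      ∫ t in Ioi 0, ((t ^ (s - 1) * exp (-((‖v‖ ^ 2 + q) * t)) : ℝ) : ℂ) := by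
    have hr : 0 < ‖v‖ ^ 2 + q := by positivity
    rw [integral_complex_ofReal, integral_rpow_mul_exp_neg_mul_Ioi hs0 hr, one_div,
      inv_rpow hr.le, ← rpow_neg hr.le, mul_comm, Complex.ofReal_mul]
  have hsplit (t : ℝ) (v : V) : ((t ^ (s - 1) * exp (-((‖v‖ ^ 2 + q) * t)) : ℝ) : ℂ) =
      ((t ^ (s - 1) * exp (-(q * t)) : ℝ) : ℂ) * Complex.exp (-(t : ℂ) * ‖v‖ ^ 2) := by
    push_cast
    rw [mul_assoc, ← Complex.exp_add]
    ring_nf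
  calc (Gamma s : ℂ) * 𝓕 (fun v : V => (((‖v‖ ^ 2 + q) ^ (-s) : ℝ) : ℂ)) w
      = 𝓕 (fun v : V => ∫ t in Ioi 0, ((t ^ (s - 1) * exp (-((‖v‖ ^ 2 + q) * t)) : ℝ) : ℂ)) w := by
        simp_rw [← fourier_const_mul, hsub]
    _ = ∫ t in Ioi 0, ((t ^ (s - 1) * exp (-(q * t)) : ℝ) : ℂ) *
          (((π / t) ^ (d / 2) * exp (-(π ^ 2 * ‖w‖ ^ 2 / t)) : ℝ) : ℂ) := by
        rw [fourier_integral_eq_integral_fourier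
          (integrable_rpow_mul_exp_neg_norm_sq_add_mul hs hq).ofReal]
        refine setIntegral_congr_fun measurableSet_Ioi fun t (ht : 0 < t) => ?_
        simp_rw [hsplit t]
        rw [fourier_const_mul, fourier_cexp_neg_real_mul_norm_sq ht]
    _ = _ := by
        rw [← integral_const_mul, ← integral_complex_ofReal]
        refine setIntegral_congr_fun measurableSet_Ioi fun t (ht : 0 < t) => ?_
        rw [← Complex.ofReal_mul, sub_right_comm, rpow_sub ht (s - 1), div_rpow pi_pos.le ht.le,
          sub_eq_add_neg _ (π ^ 2 * _ / t), exp_add]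
        field_simp

theorem fourier_rpow_neg_norm_sq_add {s q : ℝ} (hs : Module.finrank ℝ V / 2 < s) (hq : 0 < q)
    (w : V) :
    𝓕 (fun v : V => (((‖v‖ ^ 2 + q) ^ (-s) : ℝ) : ℂ)) w =
      (((π ^ (Module.finrank ℝ V / 2 : ℝ) * q ^ (Module.finrank ℝ V / 2 - s) / Gamma s) *
        Kbar (s - Module.finrank ℝ V / 2) (2 * π * √q * ‖w‖) : ℝ) : ℂ) := by
  have hs0 : 0 < s := by linarith [(Module.finrank ℝ V).cast_nonneg (α := ℝ)]
  have hΓ : (Gamma s : ℂ) ≠ 0 := by exact_mod_cast (Gamma_pos_of_pos hs0).ne'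
  have hK := integral_rpow_mul_exp_neg_mul_sub_sq_div_eq_Kbar (sub_pos.2 hs) hq
    (by positivity : 0 ≤ 2 * π * √q * ‖w‖)
  have hx (t : ℝ) : (2 * π * √q * ‖w‖) ^ 2 / (4 * q * t) = π ^ 2 * ‖w‖ ^ 2 / t := by
    rw [mul_pow, mul_pow, mul_pow, sq_sqrt hq.le]
    field_simp
    ring
  simp_rw [hx] at hK
  rw [← mul_right_inj' hΓ, gamma_mul_fourier_rpow_neg_norm_sq_add (by linarith) hq w, hK, neg_sub]
  push_cast
  field_simp

end Fourier

theorem statement9_general (n : ℕ) (s q : ℝ) (hs : (n : ℝ) / 2 < s) (hq : 0 < q)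
    (f : Vn n → ℂ) (hf : ∀ y, f y = (((‖y‖ ^ 2 + q) ^ (-s) : ℝ) : ℂ)) (w : Vn n) :
    FourierTransform.fourier f w =
      (((Real.pi ^ ((n : ℝ) / 2) * q ^ ((n : ℝ) / 2 - s) / Real.Gamma s) *
        Kbar (s - (n : ℝ) / 2) (2 * Real.pi * Real.sqrt q * ‖w‖) : ℝ) : ℂ) := by
  have h := fourier_rpow_neg_norm_sq_add (V := Vn n) (by rwa [finrank_euclideanSpace_fin]) hq w
  rw [finrank_euclideanSpace_fin] at h
  rwa [funext hf]

/-- For `s > n/2` and `q > 0`, the Fourier transform of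
`f(y) = (‖y‖² + q)^{-s}` is `f̂(w) = (π^{n/2} q^{n/2-s} / Γ(s)) K̄_{s-n/2}(2π√q ‖w‖)`. -/
theorem statement9 (n : ℕ) (hn : 1 ≤ n) (s q : ℝ) (hs : (n : ℝ) / 2 < s) (hq : 0 < q)
    (f : Vn n → ℂ) (hf : ∀ y, f y = (((‖y‖ ^ 2 + q) ^ (-s) : ℝ) : ℂ)) (w : Vn n) :
    FourierTransform.fourier f w =
      (((Real.pi ^ ((n : ℝ) / 2) * q ^ ((n : ℝ) / 2 - s) / Real.Gamma s) *
        Kbar (s - (n : ℝ) / 2) (2 * Real.pi * Real.sqrt q * ‖w‖) : ℝ) : ℂ) :=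
  statement9_general n s q hs hq f hf w
end
end
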